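/- For any monomial ideal I in a polynomial ring R over a field and any monomial f, the colon ideal (I : f) is again a monomial ideal, and dim(R/I) = max{dim(R/(I:f)), dim(R/⟨I,f⟩)}. -/

import Mathlib

open MvPolynomial

noncomputable section

/-- The depth of a ring `A` with respect to an ideal `m`: the supremum of lengths of
regular sequences on `A` consisting of elements of `m`. -/
def ringDepth (A : Type*) [CommRing A] (m : Ideal A) : ℕ∞ :=
  sSup {d : ℕ∞ | ∃ l : List A, (∀ r ∈ l, r ∈ m) ∧
    RingTheory.Sequence.IsRegular A l ∧ d = l.length}

/-- The graded maximal ideal of a polynomial ring, generated by all variables. -/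
def mvMaxIdeal (K : Type*) [Field K] (σ : Type*) : Ideal (MvPolynomial σ K) :=
  Ideal.span (Set.range (X : σ → MvPolynomial σ K))

/-- The depth of the quotient of a polynomial ring by an ideal, with respect to the image of
the graded maximal ideal. -/
def quotDepth {K : Type*} [Field K] {σ : Type*} (I : Ideal (MvPolynomial σ K)) : ℕ∞ :=
  ringDepth (MvPolynomial σ K ⧸ I) ((mvMaxIdeal K σ).map (Ideal.Quotient.mk I))

/-- An ideal `I` of a polynomial ring is Cohen-Macaulay if `depth = Krull dimension`
for the quotient ring. -/
def IsCM {K : Type*} [Field K] {σ : Type*} (I : Ideal (MvPolynomial σ K)) : Prop :=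
  (quotDepth I : WithBot ℕ∞) = ringKrullDim (MvPolynomial σ K ⧸ I)

/-- The height of an ideal: the infimum of heights of primes containing it. -/
def idealHeight {A : Type*} [CommRing A] (I : Ideal A) : ℕ∞ :=
  sInf {h : ℕ∞ | ∃ p : PrimeSpectrum A, I ≤ p.asIdeal ∧ Order.height p = h}

/-- An ideal is unmixed if all of its minimal primes have the same height. -/
def IsUnmixed {A : Type*} [CommRing A] (I : Ideal A) : Prop :=
  ∀ p ∈ I.minimalPrimes, ∀ q ∈ I.minimalPrimes, idealHeight p = idealHeight q

/-- The binomial edge ideal of a graph `G`, in `K[x_i, y_i : i ∈ V(G)]`, where `x_i`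
corresponds to `Sum.inl i` and `y_i` to `Sum.inr i`. -/
def beIdeal (K : Type*) [Field K] {V : Type*} (G : SimpleGraph V) :
    Ideal (MvPolynomial (V ⊕ V) K) :=
  Ideal.span {f | ∃ i j, G.Adj i j ∧
    f = X (Sum.inl i) * X (Sum.inr j) - X (Sum.inl j) * X (Sum.inr i)}

/-- The number of connected components of a graph. -/
def numComp {V : Type*} (G : SimpleGraph V) : ℕ := Nat.card G.ConnectedComponent

/-- `c_G(T)`: the number of connected components of `G \ T`. -/
def compCount {n : ℕ} (G : SimpleGraph (Fin n)) (T : Finset (Fin n)) : ℕ :=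
  numComp (G.induce ((↑T : Set (Fin n))ᶜ))

/-- `T` is a cutset of `G`: every `t ∈ T` is a cut vertex of `G \ (T \ {t})`. -/
def IsCutset {n : ℕ} (G : SimpleGraph (Fin n)) (T : Finset (Fin n)) : Prop :=
  ∀ t ∈ T, compCount G (T.erase t) < compCount G T

/-- `v` is a cut vertex of `G`: its removal increases the number of connected components. -/
def IsCutVertex {V : Type*} (G : SimpleGraph V) (v : V) : Prop :=
  numComp G < numComp (G.induce ({v}ᶜ : Set V))

/-- `v` is a free (simplicial) vertex of `G`: its neighbourhood induces a complete graph. -/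
def IsFreeVertex {V : Type*} (G : SimpleGraph V) (v : V) : Prop :=
  ∀ a b, G.Adj v a → G.Adj v b → a ≠ b → G.Adj a b

/-- `G_v`: the graph `G` with all edges added between distinct neighbours of `v`. -/
def nbhdComplete {V : Type*} (G : SimpleGraph V) (v : V) : SimpleGraph V where
  Adj i j := G.Adj i j ∨ (i ≠ j ∧ G.Adj v i ∧ G.Adj v j)
  symm := by
    constructor
    intro a b h
    rcases h with h | ⟨hne, h1, h2⟩
    · exact Or.inl h.symm
    · exact Or.inr ⟨hne.symm, h2, h1⟩
  loopless := by
    constructor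
    intro a h
    rcases h with h | ⟨hne, _, _⟩
    · exact G.irrefl h
    · exact hne rfl

/-- The graph obtained from `G` by attaching a whisker (pendant vertex `none`) at `v`. -/
def addWhisker {V : Type*} (G : SimpleGraph V) (v : V) : SimpleGraph (Option V) where
  Adj a b := (∃ i j, a = some i ∧ b = some j ∧ G.Adj i j) ∨
    (a = none ∧ b = some v) ∨ (a = some v ∧ b = none)
  symm := by
    constructor
    intro a b h
    rcases h with ⟨i, j, ha, hb, hadj⟩ | ⟨ha, hb⟩ | ⟨ha, hb⟩
    · exact Or.inl ⟨j, i, hb, ha, hadj.symm⟩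
    · exact Or.inr (Or.inr ⟨hb, ha⟩)
    · exact Or.inr (Or.inl ⟨hb, ha⟩)
  loopless := by
    constructor
    intro a h
    rcases h with ⟨i, j, ha, hb, hadj⟩ | ⟨ha, hb⟩ | ⟨ha, hb⟩
    · obtain rfl : i = j := Option.some.inj (ha.symm.trans hb)
      exact G.irrefl hadj
    · cases ha ▸ hb
    · cases hb ▸ ha


/-- A (monic) monomial in a polynomial ring. -/
def IsMonomial {K : Type*} [Field K] {σ : Type*} (f : MvPolynomial σ K) : Prop :=
  ∃ d : σ →₀ ℕ, f = monomial d 1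

/-- A monomial ideal: an ideal generated by a set of monomials. -/
def IsMonomialIdeal {K : Type*} [Field K] {σ : Type*} (I : Ideal (MvPolynomial σ K)) : Prop :=
  ∃ S : Set (MvPolynomial σ K), (∀ f ∈ S, IsMonomial f) ∧ I = Ideal.span S

/-- The rank of a variable in the order `x₁ > ⋯ > xₙ > y₁ > ⋯ > yₙ`
(smaller rank = bigger variable). -/
def varRank {n : ℕ} : Fin n ⊕ Fin n → ℕ
  | Sum.inl i => (i : ℕ)
  | Sum.inr i => n + (i : ℕ)

/-- Lexicographic comparison of exponent vectors induced by `x₁ > ⋯ > xₙ > y₁ > ⋯ > yₙ`: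
`d` is lex-smaller than `e`. -/
def lexLt {n : ℕ} (d e : (Fin n ⊕ Fin n) →₀ ℕ) : Prop :=
  ∃ s, (∀ t, varRank t < varRank s → d t = e t) ∧ d s < e s

/-- The initial ideal of `I` with respect to the lexicographic order induced by
`x₁ > ⋯ > xₙ > y₁ > ⋯ > yₙ`: generated by leading monomials of nonzero elements of `I`. -/
def initialIdeal {K : Type*} [Field K] {n : ℕ}
    (I : Ideal (MvPolynomial (Fin n ⊕ Fin n) K)) : Ideal (MvPolynomial (Fin n ⊕ Fin n) K) :=
  Ideal.span {m | ∃ f ∈ I, ∃ d ∈ f.support,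
    (∀ e ∈ f.support, e ≠ d → lexLt e d) ∧ m = monomial d 1}

/-- `i` and `j` lie outside `T` and in the same connected component of `G \ T`. -/
def sameComp {n : ℕ} (G : SimpleGraph (Fin n)) (T : Finset (Fin n)) (i j : Fin n) : Prop :=
  ∃ (hi : i ∈ ((↑T : Set (Fin n))ᶜ)) (hj : j ∈ ((↑T : Set (Fin n))ᶜ)),
    (G.induce ((↑T : Set (Fin n))ᶜ)).Reachable ⟨i, hi⟩ ⟨j, hj⟩

/-- The minimal prime `P_T(G)` of the binomial edge ideal: generated by the variables
indexed by `T` together with the binomial edge ideals of the complete graphs on the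
connected components of `G \ T`. -/
def PT (K : Type*) [Field K] {n : ℕ} (G : SimpleGraph (Fin n)) (T : Finset (Fin n)) :
    Ideal (MvPolynomial (Fin n ⊕ Fin n) K) :=
  Ideal.span ({f | ∃ i ∈ T, f = X (Sum.inl i) ∨ f = X (Sum.inr i)} ∪
    {f | ∃ i j, i ≠ j ∧ sameComp G T i j ∧
      f = X (Sum.inl i) * X (Sum.inr j) - X (Sum.inl j) * X (Sum.inr i)})

/-- `vc` is a choice of one vertex in each connected component of `G \ T` (encoded as a
function assigning to each vertex outside `T` the chosen vertex of its component). -/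
def IsCompChoice {n : ℕ} (G : SimpleGraph (Fin n)) (T : Finset (Fin n))
    (vc : Fin n → Fin n) : Prop :=
  (∀ i, i ∉ T → sameComp G T i (vc i)) ∧ (∀ i j, sameComp G T i j → vc i = vc j)

/-- The monomial prime `P_T(v)` associated to a cutset `T` and a choice `vc` of one
vertex in each component of `G \ T`. -/
def PTv (K : Type*) [Field K] {n : ℕ} (G : SimpleGraph (Fin n)) (T : Finset (Fin n))
    (vc : Fin n → Fin n) : Ideal (MvPolynomial (Fin n ⊕ Fin n) K) :=
  Ideal.span ({f | ∃ i ∈ T, f = X (Sum.inl i) ∨ f = X (Sum.inr i)} ∪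
    {f | ∃ i : Fin n, i ∉ T ∧ i < vc i ∧ f = X (Sum.inl i)} ∪
    {f | ∃ j : Fin n, j ∉ T ∧ vc j < j ∧ f = X (Sum.inr j)})

/-- A block of `G`: a maximal connected induced subgraph without cut vertices. -/
def IsBlock {n : ℕ} (G : SimpleGraph (Fin n)) (B : Set (Fin n)) : Prop :=
  (G.induce B).Connected ∧ (∀ w : B, ¬ IsCutVertex (G.induce B) w) ∧
    ∀ B' : Set (Fin n), B ⊆ B' → (G.induce B').Connected →
      (∀ w : B', ¬ IsCutVertex (G.induce B') w) → B' = B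

/-- The block-with-whiskers `B̄`: the induced graph on the block `B` together with one
whisker attached at each cut vertex of `G` lying in `B`. -/
def blockWhisker {n : ℕ} (G : SimpleGraph (Fin n)) (B : Set (Fin n)) :
    SimpleGraph (↥B ⊕ {w : Fin n // w ∈ B ∧ IsCutVertex G w}) where
  Adj a b := (∃ i j, a = Sum.inl i ∧ b = Sum.inl j ∧ G.Adj i j) ∨
    (∃ i c, a = Sum.inl i ∧ b = Sum.inr c ∧ (i : Fin n) = (c : Fin n)) ∨
    (∃ i c, a = Sum.inr c ∧ b = Sum.inl i ∧ (i : Fin n) = (c : Fin n))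
  symm := by
    constructor
    intro a b h
    rcases h with ⟨i, j, ha, hb, hadj⟩ | ⟨i, c, ha, hb, hic⟩ | ⟨i, c, ha, hb, hic⟩
    · exact Or.inl ⟨j, i, hb, ha, hadj.symm⟩
    · exact Or.inr (Or.inr ⟨i, c, hb, ha, hic⟩)
    · exact Or.inr (Or.inl ⟨i, c, hb, ha, hic⟩)
  loopless := by
    constructor
    intro a h
    rcases h with ⟨i, j, ha, hb, hadj⟩ | ⟨i, c, ha, hb, _⟩ | ⟨i, c, ha, hb, _⟩
    · obtain rfl : i = j := Sum.inl.inj (ha.symm.trans hb)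
      exact G.irrefl hadj
    · cases ha.symm.trans hb
    · cases ha.symm.trans hb

/-- A graph is accessible if its binomial edge ideal is unmixed and every nonempty
cutset `T` contains a vertex `t` with `T \ {t}` again a cutset. -/
def Accessible (K : Type*) [Field K] {n : ℕ} (G : SimpleGraph (Fin n)) : Prop :=
  IsUnmixed (beIdeal K G) ∧
    ∀ T : Finset (Fin n), IsCutset G T → T.Nonempty → ∃ t ∈ T, IsCutset G (T.erase t)

/-!
Membership in the ideal spanned by monomials `x^a, a ∈ s` is read off the support, so
`g x^e` lies in it iff every exponent `d` of `g` has some `a ∈ s` with `a ≤ d + e`, i.e.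
`a - e ≤ d`: the colon ideal is spanned by the monomials `x^(a - e)`.

For the dimension, a prime containing `I` either contains `f`, hence `⟨I, f⟩`, or does not,
and then it contains `I : f` by primality. Both loci are closed upwards, so every chain of
primes containing `I` lies entirely in one of them, according to its smallest member.
-/

theorem Order.krullDim_union_of_isUpperSet {α : Type*} [Preorder α] {s t : Set α}
    (hs : IsUpperSet s) (ht : IsUpperSet t) :
    krullDim ↥(s ∪ t) = max (krullDim s) (krullDim t) := by
  refine le_antisymm ?_ (max_le
    (krullDim_le_of_strictMono (Set.inclusion Set.subset_union_left) fun _ _ h => h)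
    (krullDim_le_of_strictMono (Set.inclusion Set.subset_union_right) fun _ _ h => h))
  refine iSup_le fun p => ?_
  have restrict {u : Set α} (hu : IsUpperSet u) (hp : (p.head : α) ∈ u) :
      (p.length : WithBot ℕ∞) ≤ krullDim u :=
    LTSeries.length_le_krullDim
      ⟨p.length, fun i => ⟨p i, hu (p.head_le i) hp⟩, fun i => p.step i⟩
  rcases p.head.2 with hs' | ht'
  · exact (restrict hs hs').trans (le_max_left _ _)
  · exact (restrict ht ht').trans (le_max_right _ _)

theorem PrimeSpectrum.isUpperSet_zeroLocus {R : Type*} [CommSemiring R] (s : Set R) :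
    IsUpperSet (zeroLocus s) :=
  fun _ _ hpq hp => Set.Subset.trans hp hpq

theorem PrimeSpectrum.zeroLocus_eq_colon_union_sup {R : Type*} [CommRing R] (I : Ideal R)
    (f : R) :
    zeroLocus (I : Set R) =
      zeroLocus (I.colon (Ideal.span {f}) : Set R) ∪
        zeroLocus ((I ⊔ Ideal.span {f} : Ideal R) : Set R) := by
  refine subset_antisymm (fun p hp => ?_) (Set.union_subset
    (zeroLocus_anti_mono_ideal fun g hg =>
      Ideal.mem_colon_span_singleton.mpr (I.mul_mem_right f hg))
    (zeroLocus_anti_mono_ideal le_sup_left))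
  rw [mem_zeroLocus, SetLike.coe_subset_coe] at hp
  by_cases hf : f ∈ p.asIdeal
  · exact Or.inr (sup_le hp ((Ideal.span_singleton_le_iff_mem _).mpr hf))
  · exact Or.inl fun g hg =>
      (p.isPrime.mem_or_mem (hp (Ideal.mem_colon_span_singleton.mp hg))).resolve_right hf

theorem ringKrullDim_quotient_eq_max_colon_sup {R : Type*} [CommRing R] (I : Ideal R) (f : R) :
    ringKrullDim (R ⧸ I) =
      max (ringKrullDim (R ⧸ (I.colon (Ideal.span {f}) : Ideal R)))
        (ringKrullDim (R ⧸ (I ⊔ Ideal.span {f}))) := by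
  simp only [ringKrullDim_quotient]
  rw [PrimeSpectrum.zeroLocus_eq_colon_union_sup I f]
  exact Order.krullDim_union_of_isUpperSet (PrimeSpectrum.isUpperSet_zeroLocus _)
    (PrimeSpectrum.isUpperSet_zeroLocus _)

namespace MvPolynomial

variable {σ R : Type*} [CommSemiring R]

theorem support_mul_monomial_one (p : MvPolynomial σ R) (e : σ →₀ ℕ) :
    (p * monomial e 1).support = p.support.map (addRightEmbedding e) :=
  AddMonoidAlgebra.support_coeff_mul_single p _ (by simp) _

theorem colon_span_monomial_image (s : Set (σ →₀ ℕ)) (e : σ →₀ ℕ) :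
    (Ideal.span ((fun d => monomial d (1 : R)) '' s)).colon
        (Ideal.span {monomial e (1 : R)}) =
      Ideal.span ((fun d => monomial d (1 : R)) '' ((· - e) '' s)) := by
  ext g
  simp only [Ideal.mem_colon_span_singleton, mem_ideal_span_monomial_image,
    support_mul_monomial_one, Finset.forall_mem_map, Set.exists_mem_image, tsub_le_iff_right]
  rfl

end MvPolynomial

theorem isMonomialIdeal_iff {K : Type*} [Field K] {σ : Type*} {I : Ideal (MvPolynomial σ K)} :
    IsMonomialIdeal I ↔
      ∃ s : Set (σ →₀ ℕ), I = Ideal.span ((fun d => monomial d (1 : K)) '' s) := by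
  constructor
  · rintro ⟨S, hS, rfl⟩
    refine ⟨{d | monomial d 1 ∈ S},
      congrArg Ideal.span (Set.ext fun g => ⟨fun hg => ?_, ?_⟩)⟩
    · obtain ⟨d, rfl⟩ := hS g hg
      exact ⟨d, hg, rfl⟩
    · rintro ⟨d, hd, rfl⟩
      exact hd
  · rintro ⟨s, rfl⟩
    exact ⟨_, by rintro _ ⟨d, -, rfl⟩; exact ⟨d, rfl⟩, rfl⟩

theorem IsMonomialIdeal.colon_span_singleton {K : Type*} [Field K] {σ : Type*}
    {I : Ideal (MvPolynomial σ K)} {f : MvPolynomial σ K} (hI : IsMonomialIdeal I)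
    (hf : IsMonomial f) :
    IsMonomialIdeal (I.colon (Ideal.span {f})) := by
  obtain ⟨s, rfl⟩ := isMonomialIdeal_iff.mp hI
  obtain ⟨e, rfl⟩ := hf
  rw [colon_span_monomial_image]
  exact isMonomialIdeal_iff.mpr ⟨_, rfl⟩

theorem stmt_1 {K : Type*} [Field K] {n : ℕ} (I : Ideal (MvPolynomial (Fin n) K))
    (f : MvPolynomial (Fin n) K) (hI : IsMonomialIdeal I) (hf : IsMonomial f) :
    IsMonomialIdeal (Submodule.colon I (Ideal.span {f})) ∧
      ringKrullDim (MvPolynomial (Fin n) K ⧸ I) =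
        max (ringKrullDim (MvPolynomial (Fin n) K ⧸ (Submodule.colon I (Ideal.span {f}) : Ideal (MvPolynomial (Fin n) K))))
          (ringKrullDim (MvPolynomial (Fin n) K ⧸ (I ⊔ Ideal.span {f}))) :=
  ⟨hI.colon_span_singleton hf, ringKrullDim_quotient_eq_max_colon_sup I f⟩

end
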